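/- arXiv:0809.4873 — 6 statements merged into one kernel-verified Lean document; each statement's English description precedes it below -/
import Mathlib

section
/- Let M_x, M_y, M_z ∈ SL(2,C) and set X = Tr(M_y M_z), Y = Tr(M_z M_x), Z = Tr(M_x M_y), p_x = Tr M_x, p_y = Tr M_y, p_z = Tr M_z, p_∞ = Tr(M_z M_y M_x). Then Tr(M_y^{-1} M_x M_z^{-1} M_x^{-1}) = p_x p_∞ + p_y p_z − X − Y Z. -/
/-!
By Cayley–Hamilton, every `A ∈ SL(2, R)` satisfies `A⁻¹ = tr A • 1 - A`, which yields the
Fricke identity `tr (A B) + tr (A B⁻¹) = tr A * tr B`. Rotating the word cyclically and using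
this identity to remove the inverses one at a time reduces `tr (y⁻¹ x z⁻¹ x⁻¹)` to traces of
`x`, `y`, `z`, `yz`, `zx`, `xy` and `zyx`.
-/

open scoped MatrixGroups

namespace Matrix.SpecialLinearGroup

section Conj

variable {n R : Type*} [Fintype n] [DecidableEq n] [CommRing R]

local notation "τ" A:max => Matrix.trace ((A : SpecialLinearGroup n R) : Matrix n n R)

theorem trace_mul_comm (A B : SpecialLinearGroup n R) : τ (A * B) = τ (B * A) := by
  rw [coe_mul, coe_mul, Matrix.trace_mul_comm]

theorem trace_conj (A B : SpecialLinearGroup n R) : τ (A * B * A⁻¹) = τ B := by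
  rw [trace_mul_comm, inv_mul_cancel_left]

theorem trace_conj' (A B : SpecialLinearGroup n R) : τ (A⁻¹ * B * A) = τ B := by
  simpa only [inv_inv] using trace_conj A⁻¹ B

end Conj

section FinTwo

variable {R : Type*} [CommRing R]

local notation "τ" A:max => Matrix.trace ((A : SL(2, R)) : Matrix (Fin 2) (Fin 2) R)

theorem coe_inv_eq_trace_smul_one_sub (A : SL(2, R)) :
    ((A⁻¹ : SL(2, R)) : Matrix (Fin 2) (Fin 2) R) = τ A • 1 - A := by
  ext i j
  fin_cases i <;> fin_cases j <;> simp [SL2_inv_expl, trace_fin_two]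

theorem trace_mul_add_trace_mul_inv (A B : SL(2, R)) : τ (A * B) + τ (A * B⁻¹) = τ A * τ B := by
  rw [coe_mul, coe_mul, coe_inv_eq_trace_smul_one_sub, mul_sub, mul_smul_comm, mul_one,
    trace_sub, trace_smul, smul_eq_mul]
  ring

theorem trace_mul_inv (A B : SL(2, R)) : τ (A * B⁻¹) = τ A * τ B - τ (A * B) :=
  eq_sub_of_add_eq' (trace_mul_add_trace_mul_inv A B)

theorem trace_mul_eq (A B : SL(2, R)) : τ (A * B) = τ A * τ B - τ (A * B⁻¹) :=
  eq_sub_of_add_eq (trace_mul_add_trace_mul_inv A B)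

theorem trace_inv (A : SL(2, R)) : τ A⁻¹ = τ A := by
  simpa [two_mul] using trace_mul_add_trace_mul_inv 1 A

theorem trace_mul_mul_mul_mul (A B C : SL(2, R)) :
    τ (A * B * C * B) = τ (A * B) * τ (C * B) - τ A * τ C + τ (A * C) :=
  calc τ (A * B * C * B)
      = τ (C * B * (A * B)) := by
        simpa only [mul_assoc] using trace_mul_comm (A * B) (C * B)
    _ = τ (C * B) * τ (A * B) - τ (C * A⁻¹) := by
        rw [trace_mul_eq, _root_.mul_inv_rev, mul_assoc C, mul_inv_cancel_left]
    _ = τ (A * B) * τ (C * B) - τ A * τ C + τ (A * C) := by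
        rw [trace_mul_inv, trace_mul_comm C A]
        ring

end FinTwo

end Matrix.SpecialLinearGroup

open Matrix.SpecialLinearGroup

local notation "τ" A:max => Matrix.trace ((A : SL(2, ℂ)) : Matrix (Fin 2) (Fin 2) ℂ)

theorem trace_action_x
    (Mx My Mz : Matrix.SpecialLinearGroup (Fin 2) ℂ) :
    Matrix.trace ((↑(My⁻¹ * Mx * Mz⁻¹ * Mx⁻¹) : Matrix (Fin 2) (Fin 2) ℂ))
      = Matrix.trace ((Mx : Matrix (Fin 2) (Fin 2) ℂ))
          * Matrix.trace ((↑(Mz * My * Mx) : Matrix (Fin 2) (Fin 2) ℂ))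
        + Matrix.trace ((My : Matrix (Fin 2) (Fin 2) ℂ))
          * Matrix.trace ((Mz : Matrix (Fin 2) (Fin 2) ℂ))
        - Matrix.trace ((↑(My * Mz) : Matrix (Fin 2) (Fin 2) ℂ))
        - Matrix.trace ((↑(Mz * Mx) : Matrix (Fin 2) (Fin 2) ℂ))
          * Matrix.trace ((↑(Mx * My) : Matrix (Fin 2) (Fin 2) ℂ)) := by
  calc τ (My⁻¹ * Mx * Mz⁻¹ * Mx⁻¹)
      = τ (Mx⁻¹ * My⁻¹ * Mx * Mz⁻¹) := by
        simpa only [mul_assoc] using trace_mul_comm (My⁻¹ * Mx * Mz⁻¹) Mx⁻¹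
    _ = τ My * τ Mz - τ (Mx⁻¹ * My⁻¹ * Mx * Mz) := by
        rw [trace_mul_inv, trace_conj', trace_inv]
    _ = τ My * τ Mz - τ (Mx * Mz * Mx⁻¹ * My⁻¹) := by
        congr 1
        simpa only [mul_assoc] using trace_mul_comm (Mx⁻¹ * My⁻¹) (Mx * Mz)
    _ = τ (My * Mx * Mz * Mx⁻¹) := by
        rw [trace_mul_inv, trace_conj, mul_comm (τ Mz), sub_sub_cancel]
        simpa only [mul_assoc] using trace_mul_comm (Mx * Mz * Mx⁻¹) My
    _ = τ (Mz * My * Mx) * τ Mx - τ (My * Mx * Mz * Mx) := by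
        rw [trace_mul_inv]
        congr 2
        simpa only [mul_assoc] using trace_mul_comm (My * Mx) Mz
    _ = _ := by
        rw [trace_mul_mul_mul_mul, trace_mul_comm My Mx]
        ring
end

section
/- Let M_x, M_y, M_z ∈ SL(2,C) with invariants p_x = Tr M_x, p_y = Tr M_y, p_z = Tr M_z, p_∞ = Tr(M_z M_y M_x), X = Tr(M_y M_z), Y = Tr(M_z M_x), Z = Tr(M_x M_y). Define ω_X = p_x p_∞ + p_y p_z, ω_Y = p_y p_∞ + p_z p_x, ω_Z = p_z p_∞ + p_x p_y, ω_4 = p_x² + p_y² + p_z² + p_∞² + p_x p_y p_z p_∞. Then the Jimbo–Fricke relation holds: X Y Z + X² + Y² + Z² − ω_X X − ω_Y Y − ω_Z Z + ω_4 = 4. -/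
/-!
As a polynomial in `p_∞ = Tr(M_z M_y M_x)`, the left-hand side minus `4` is the monic quadratic
whose roots are `Tr(M_z M_y M_x)` and `Tr(M_x M_y M_z)`. Vieta's formulas for this pair are trace
identities valid for all `2 × 2` matrices over a commutative ring, once the product is written with
the determinants, which are `1` in `SL(2, ℂ)`.
-/

namespace Matrix

variable {R : Type*} [CommRing R]

theorem trace_mul_mul_add_trace_mul_mul_rev_fin_two (A B C : Matrix (Fin 2) (Fin 2) R) :
    trace (C * B * A) + trace (A * B * C) =
      trace A * trace (B * C) + trace B * trace (C * A) + trace C * trace (A * B) -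
        trace A * trace B * trace C := by
  simp only [trace_fin_two, mul_apply, Fin.sum_univ_two]
  ring

theorem trace_mul_mul_mul_trace_mul_mul_rev_fin_two (A B C : Matrix (Fin 2) (Fin 2) R) :
    trace (C * B * A) * trace (A * B * C) =
      det B * det C * trace A ^ 2 + det C * det A * trace B ^ 2 + det A * det B * trace C ^ 2 +
        det A * trace (B * C) ^ 2 + det B * trace (C * A) ^ 2 + det C * trace (A * B) ^ 2 +
        trace (B * C) * trace (C * A) * trace (A * B) -
        det A * trace B * trace C * trace (B * C) - det B * trace C * trace A * trace (C * A) -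
        det C * trace A * trace B * trace (A * B) - 4 * det A * det B * det C := by
  simp only [trace_fin_two, det_fin_two, mul_apply, Fin.sum_univ_two]
  ring

end Matrix

theorem jimbo_fricke_relation
    (Mx My Mz : Matrix.SpecialLinearGroup (Fin 2) ℂ) :
    let px := Matrix.trace ((Mx : Matrix (Fin 2) (Fin 2) ℂ))
    let py := Matrix.trace ((My : Matrix (Fin 2) (Fin 2) ℂ))
    let pz := Matrix.trace ((Mz : Matrix (Fin 2) (Fin 2) ℂ))
    let pinf := Matrix.trace ((↑(Mz * My * Mx) : Matrix (Fin 2) (Fin 2) ℂ))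
    let X := Matrix.trace ((↑(My * Mz) : Matrix (Fin 2) (Fin 2) ℂ))
    let Y := Matrix.trace ((↑(Mz * Mx) : Matrix (Fin 2) (Fin 2) ℂ))
    let Z := Matrix.trace ((↑(Mx * My) : Matrix (Fin 2) (Fin 2) ℂ))
    let ωX := px * pinf + py * pz
    let ωY := py * pinf + pz * px
    let ωZ := pz * pinf + px * py
    let ω4 := px ^ 2 + py ^ 2 + pz ^ 2 + pinf ^ 2 + px * py * pz * pinf
    X * Y * Z + X ^ 2 + Y ^ 2 + Z ^ 2 - ωX * X - ωY * Y - ωZ * Z + ω4 = 4 := by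
  obtain ⟨A, hA⟩ := Mx
  obtain ⟨B, hB⟩ := My
  obtain ⟨C, hC⟩ := Mz
  dsimp only
  have hsum := Matrix.trace_mul_mul_add_trace_mul_mul_rev_fin_two A B C
  have hprod := Matrix.trace_mul_mul_mul_trace_mul_mul_rev_fin_two A B C
  rw [hA, hB, hC] at hprod
  linear_combination (C * B * A).trace * hsum - hprod
end

section
/- Let ω_Y, ω_Z ∈ C, ε = ±1, and define sequences by the recursion Y_{k+1} = −Y_k − 2ε Z_k + ω_Y, Z_{k+1} = 2ε Y_k + 3 Z_k + ω_Z − 2ε ω_Y (the case X = 2ε). Then Y_k = (1−2k)α − 2εk β + (ω_Y + ε ω_Z)/8 − (ω_Y − ε ω_Z)k/2 + (ω_Y − ε ω_Z)k², Z_k = 2εk α + (1+2k)β + (ω_Z + ε ω_Y)/8 + (ω_Z − ε ω_Y)k/2 + (ω_Z − ε ω_Y)k², solves this recursion for all k and any constants α, β. -/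
/-!
For `ε ^ 2 = 1` the step matrix `[[-1, -2ε], [2ε, 3]]` has trace 2 and determinant `4ε² - 3 = 1`,
so 1 is a double eigenvalue: the homogeneous solutions are affine in `k` and the constant forcing
needs a particular solution quadratic in `k`. Checking the closed form is then a polynomial
identity that holds modulo `ε ^ 2 - 1`.
-/

section DegenerateSolution

variable {K : Type*} [Field K] [CharZero K] (ωY ωZ ε α β : K)

def degenerateY (k : ℕ) : K :=
  (1 - 2 * (k : K)) * α - 2 * ε * (k : K) * β
    + (ωY + ε * ωZ) / 8 - (ωY - ε * ωZ) * (k : K) / 2 + (ωY - ε * ωZ) * (k : K) ^ 2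

def degenerateZ (k : ℕ) : K :=
  2 * ε * (k : K) * α + (1 + 2 * (k : K)) * β
    + (ωZ + ε * ωY) / 8 + (ωZ - ε * ωY) * (k : K) / 2 + (ωZ - ε * ωY) * (k : K) ^ 2

variable {ε}

theorem degenerateY_succ (hε : ε ^ 2 = 1) (k : ℕ) :
    degenerateY ωY ωZ ε α β (k + 1) =
      -degenerateY ωY ωZ ε α β k - 2 * ε * degenerateZ ωY ωZ ε α β k + ωY := by
  simp only [degenerateY, degenerateZ]
  push_cast
  linear_combination (4 * k * α - k * ωY - 2 * k ^ 2 * ωY + ωY / 4) * hε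

theorem degenerateZ_succ (hε : ε ^ 2 = 1) (k : ℕ) :
    degenerateZ ωY ωZ ε α β (k + 1) =
      2 * ε * degenerateY ωY ωZ ε α β k + 3 * degenerateZ ωY ωZ ε α β k + ωZ - 2 * ε * ωY := by
  simp only [degenerateY, degenerateZ]
  push_cast
  linear_combination (4 * k * β - k * ωZ + 2 * k ^ 2 * ωZ - ωZ / 4) * hε

end DegenerateSolution

theorem yz_recursion_degenerate_solution
    (ωY ωZ ε : ℂ) (hε : ε = 1 ∨ ε = -1) (α β : ℂ) :
    let Y : ℕ → ℂ := fun k =>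
      (1 - 2 * (k : ℂ)) * α - 2 * ε * (k : ℂ) * β
        + (ωY + ε * ωZ) / 8 - (ωY - ε * ωZ) * (k : ℂ) / 2 + (ωY - ε * ωZ) * (k : ℂ) ^ 2
    let Z : ℕ → ℂ := fun k =>
      2 * ε * (k : ℂ) * α + (1 + 2 * (k : ℂ)) * β
        + (ωZ + ε * ωY) / 8 + (ωZ - ε * ωY) * (k : ℂ) / 2 + (ωZ - ε * ωY) * (k : ℂ) ^ 2
    ∀ k : ℕ, Y (k + 1) = -Y k - 2 * ε * Z k + ωY ∧
      Z (k + 1) = 2 * ε * Y k + 3 * Z k + ωZ - 2 * ε * ωY := by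
  intro Y Z k
  have hε2 : ε ^ 2 = 1 := sq_eq_one_iff.mpr hε
  exact ⟨degenerateY_succ ωY ωZ α β hε2 k, degenerateZ_succ ωY ωZ α β hε2 k⟩
end

section
/- Let ω_Y, ω_Z ∈ C, ε = ±1, and suppose sequences (Y_k), (Z_k) satisfy the recursion Y_{k+1} = −Y_k − 2ε Z_k + ω_Y, Z_{k+1} = 2ε Y_k + 3 Z_k + ω_Z − 2ε ω_Y, and are periodic with some period N ≥ 1. Then ω_Y = ε ω_Z and the sequences are constant: Y_k = Y_0 and Z_k = Z_0 for all k. -/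
/-!
With `ε² = 1`, the combination `W_k = ε Y_k + Z_k` satisfies `W_{k+1} = W_k + (ω_Z - ε ω_Y)`, so it
is an arithmetic progression; being periodic, its step vanishes and `W` is constant. Substituting
`Z_k = W_0 - ε Y_k` turns the recursion for `Y` into `Y_{k+1} = Y_k + (ω_Y - 2 ε W_0)`, again a
periodic arithmetic progression, hence constant, and then so is `Z`.
-/

section ArithmeticProgression

variable {M : Type*} [AddCommGroup M] {a : ℕ → M} {d : M}

theorem apply_eq_add_nsmul_of_succ_eq_add (ha : ∀ k, a (k + 1) = a k + d) (k : ℕ) :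
    a k = a 0 + k • d := by
  induction k with
  | zero => simp
  | succ k ih => rw [ha, ih, succ_nsmul, add_assoc]

theorem eq_zero_of_succ_eq_add_of_periodic [IsAddTorsionFree M]
    (ha : ∀ k, a (k + 1) = a k + d) {N : ℕ} (hN : N ≠ 0) (hper : a N = a 0) : d = 0 := by
  have hNd : N • d = 0 := by
    simpa [hper] using apply_eq_add_nsmul_of_succ_eq_add ha N
  exact (nsmul_eq_zero_iff_right hN).mp hNd

theorem apply_eq_apply_zero_of_succ_eq_add_of_periodic [IsAddTorsionFree M]
    (ha : ∀ k, a (k + 1) = a k + d) {N : ℕ} (hN : N ≠ 0) (hper : a N = a 0) (k : ℕ) :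
    a k = a 0 := by
  simp [apply_eq_add_nsmul_of_succ_eq_add ha k, eq_zero_of_succ_eq_add_of_periodic ha hN hper]

end ArithmeticProgression

theorem yz_recursion_degenerate_periodic_implies_constant
    (ωY ωZ ε : ℂ) (hε : ε = 1 ∨ ε = -1) (Y Z : ℕ → ℂ)
    (hrec : ∀ k : ℕ, Y (k + 1) = -Y k - 2 * ε * Z k + ωY ∧
      Z (k + 1) = 2 * ε * Y k + 3 * Z k + ωZ - 2 * ε * ωY)
    (N : ℕ) (hN : 1 ≤ N)
    (hper : ∀ k : ℕ, Y (k + N) = Y k ∧ Z (k + N) = Z k) :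
    ωY = ε * ωZ ∧ ∀ k : ℕ, Y k = Y 0 ∧ Z k = Z 0 := by
  have hε2 : ε * ε = 1 := by rcases hε with rfl | rfl <;> norm_num
  have hN0 : N ≠ 0 := by omega
  have hYN : Y N = Y 0 := by simpa using (hper 0).1
  have hZN : Z N = Z 0 := by simpa using (hper 0).2
  set W : ℕ → ℂ := fun k => ε * Y k + Z k
  have hW : ∀ k, W (k + 1) = W k + (ωZ - ε * ωY) := fun k => by
    linear_combination ε * (hrec k).1 + (hrec k).2 - 2 * Z k * hε2
  have hWN : W N = W 0 := by simp only [W, hYN, hZN]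
  have hd := eq_zero_of_succ_eq_add_of_periodic hW hN0 hWN
  have hWconst := apply_eq_apply_zero_of_succ_eq_add_of_periodic hW hN0 hWN
  have hY : ∀ k, Y (k + 1) = Y k + (ωY - 2 * ε * W 0) := fun k => by
    linear_combination (hrec k).1 - 2 * ε * hWconst k + 2 * Y k * hε2
  have hYconst := apply_eq_apply_zero_of_succ_eq_add_of_periodic hY hN0 hYN
  refine ⟨by linear_combination -ε * hd - ωY * hε2, fun k => ⟨hYconst k, ?_⟩⟩
  linear_combination hWconst k - ε * hYconst k
end

section
/- Suppose M^a, M^b, M^c ∈ SL(2,C) are all upper triangular (M_{21} = 0 for each). Then with p_x = Tr M^a, X = Tr(M^b M^c), etc., the relations ω_X = 2X + YZ, ω_Y = 2Y + XZ, ω_Z = 2Z + XY hold, where X = Tr(M^b M^c), Y = Tr(M^c M^a), Z = Tr(M^a M^b), ω_X = Tr(M^a)·Tr(M^c M^b M^a) + Tr(M^b)·Tr(M^c), ω_Y = Tr(M^b)·Tr(M^c M^b M^a) + Tr(M^c)·Tr(M^a), ω_Z = Tr(M^c)·Tr(M^c M^b M^a) + Tr(M^a)·Tr(M^b). -/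
/-! Upper-triangular matrices multiply diagonally, so on the triangular subgroup every trace of
a word in `Mᵃ, Mᵇ, Mᶜ` is `w(a, b, c) + w(a⁻¹, b⁻¹, c⁻¹)`, where `a, b, c` are the `(0, 0)`-entries
and `w` is the word read in the abelian group of diagonal entries (the `(1, 1)`-entries are the
inverses because the determinant is `1`). Each relation is then an identity of Laurent
polynomials. -/

namespace Matrix

theorem IsUpperTriangular.mul_apply_self {n R : Type*} [LinearOrder n] [Fintype n]
    [NonUnitalNonAssocSemiring R] {M N : Matrix n n R} (hM : M.IsUpperTriangular)
    (hN : N.IsUpperTriangular) (i : n) : (M * N) i i = M i i * N i i := by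
  rw [mul_apply]
  refine Finset.sum_eq_single i (fun j _ hji => ?_) (by simp)
  rcases hji.lt_or_gt with hlt | hgt
  · rw [hM hlt, zero_mul]
  · rw [hN hgt, mul_zero]

theorem isUpperTriangular_fin_two_iff {R : Type*} [Zero R] {M : Matrix (Fin 2) (Fin 2) R} :
    M.IsUpperTriangular ↔ M 1 0 = 0 := by
  refine ⟨fun h => h (by decide), fun h i j hji => ?_⟩
  fin_cases i <;> fin_cases j <;> simp_all

theorem IsUpperTriangular.apply_zero_zero_mul_apply_one_one_of_det_eq_one {R : Type*}
    [CommRing R] {M : Matrix (Fin 2) (Fin 2) R} (hM : M.IsUpperTriangular) (hdet : M.det = 1) :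
    M 0 0 * M 1 1 = 1 := by
  rwa [det_of_isUpperTriangular hM, Fin.prod_univ_two] at hdet

end Matrix

/-- `ω_X = 2X + YZ` on diagonal entries (`x` of `Mᵃ`, `y` of `Mᵇ`, `z` of `Mᶜ`); the relations
for `ω_Y` and `ω_Z` are its cyclic permutations. -/
theorem diagonal_orbit_I_relation {R : Type*} [CommRing R] {x₀ x₁ : R} (hx : x₀ * x₁ = 1)
    (y₀ y₁ z₀ z₁ : R) :
    (x₀ + x₁) * (z₀ * y₀ * x₀ + z₁ * y₁ * x₁) + (y₀ + y₁) * (z₀ + z₁) =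
      2 * (y₀ * z₀ + y₁ * z₁) + (z₀ * x₀ + z₁ * x₁) * (x₀ * y₀ + x₁ * y₁) := by
  linear_combination (y₁ * z₁ + y₀ * z₀ - y₁ * z₀ - y₀ * z₁) * hx

theorem upper_triangular_orbit_I_relations
    (Ma Mb Mc : Matrix.SpecialLinearGroup (Fin 2) ℂ)
    (ha : (Ma : Matrix (Fin 2) (Fin 2) ℂ) 1 0 = 0)
    (hb : (Mb : Matrix (Fin 2) (Fin 2) ℂ) 1 0 = 0)
    (hc : (Mc : Matrix (Fin 2) (Fin 2) ℂ) 1 0 = 0) :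
    let X := Matrix.trace ((↑(Mb * Mc) : Matrix (Fin 2) (Fin 2) ℂ))
    let Y := Matrix.trace ((↑(Mc * Ma) : Matrix (Fin 2) (Fin 2) ℂ))
    let Z := Matrix.trace ((↑(Ma * Mb) : Matrix (Fin 2) (Fin 2) ℂ))
    let pinf := Matrix.trace ((↑(Mc * Mb * Ma) : Matrix (Fin 2) (Fin 2) ℂ))
    let ωX := Matrix.trace ((Ma : Matrix (Fin 2) (Fin 2) ℂ)) * pinf
      + Matrix.trace ((Mb : Matrix (Fin 2) (Fin 2) ℂ))
        * Matrix.trace ((Mc : Matrix (Fin 2) (Fin 2) ℂ))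
    let ωY := Matrix.trace ((Mb : Matrix (Fin 2) (Fin 2) ℂ)) * pinf
      + Matrix.trace ((Mc : Matrix (Fin 2) (Fin 2) ℂ))
        * Matrix.trace ((Ma : Matrix (Fin 2) (Fin 2) ℂ))
    let ωZ := Matrix.trace ((Mc : Matrix (Fin 2) (Fin 2) ℂ)) * pinf
      + Matrix.trace ((Ma : Matrix (Fin 2) (Fin 2) ℂ))
        * Matrix.trace ((Mb : Matrix (Fin 2) (Fin 2) ℂ))
    ωX = 2 * X + Y * Z ∧ ωY = 2 * Y + X * Z ∧ ωZ = 2 * Z + X * Y := by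
  have hA := Matrix.isUpperTriangular_fin_two_iff.2 ha
  have hB := Matrix.isUpperTriangular_fin_two_iff.2 hb
  have hC := Matrix.isUpperTriangular_fin_two_iff.2 hc
  have hCB : (Mc * Mb : Matrix (Fin 2) (Fin 2) ℂ).IsUpperTriangular := hC.mul hB
  simp only [Matrix.SpecialLinearGroup.coe_mul, Matrix.trace_fin_two,
    hA.mul_apply_self hB, hB.mul_apply_self hC, hC.mul_apply_self hA, hCB.mul_apply_self hA,
    hC.mul_apply_self hB]
  have detA := hA.apply_zero_zero_mul_apply_one_one_of_det_eq_one Ma.det_coe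
  have detB := hB.apply_zero_zero_mul_apply_one_one_of_det_eq_one Mb.det_coe
  have detC := hC.apply_zero_zero_mul_apply_one_one_of_det_eq_one Mc.det_coe
  refine ⟨?_, ?_, ?_⟩
  · linear_combination diagonal_orbit_I_relation detA (Mb 0 0) (Mb 1 1) (Mc 0 0) (Mc 1 1)
  · linear_combination diagonal_orbit_I_relation detB (Mc 0 0) (Mc 1 1) (Ma 0 0) (Ma 1 1)
  · linear_combination diagonal_orbit_I_relation detC (Ma 0 0) (Ma 1 1) (Mb 0 0) (Mb 1 1)
end

section
/- Let M_x, M_y, M_z ∈ SL(2,C) satisfy Tr M_x = Tr M_y = Tr(M_x M_y) = 2 and Tr M_z = Tr(M_x M_z) = Tr(M_y M_z) = 2. Then M_x, M_y, M_z have a common eigenvector. -/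
/-!
Put `N = M - 1` for each of the three matrices. Trace `2` and determinant `1` make `N` a
traceless matrix of determinant `0`, and `Tr (M M') = 2` becomes `Tr (N N') = 0`. For two such
`2 × 2` matrices this forces `N N' = 0`. Hence if some `N` is nonzero, a nonzero vector in its
image is killed by every `N'`, i.e. it is fixed by all three matrices; if all `N` vanish, any
nonzero vector works.
-/

namespace Matrix

variable {R : Type*} [CommRing R]

theorem fin_two_eq_zero_iff (a b c d : R) :
    !![a, b; c, d] = 0 ↔ (a = 0 ∧ b = 0) ∧ c = 0 ∧ d = 0 := by
  simp only [← Matrix.ext_iff, Fin.forall_fin_two, of_apply, cons_val', cons_val_zero,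
    cons_val_one, cons_val_fin_one, zero_apply]

theorem mul_self_eq_zero_of_trace_eq_zero_of_det_eq_zero {N : Matrix (Fin 2) (Fin 2) R}
    (ht : N.trace = 0) (hd : N.det = 0) : N * N = 0 := by
  obtain ⟨a, b, c, d, rfl⟩ : ∃ a b c d, N = !![a, b; c, d] := ⟨_, _, _, _, eta_fin_two N⟩
  rw [trace_fin_two_of] at ht
  rw [det_fin_two_of] at hd
  rw [mul_fin_two, fin_two_eq_zero_iff]
  refine ⟨⟨?_, ?_⟩, ?_, ?_⟩
  · linear_combination a * ht - hd
  · linear_combination b * ht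
  · linear_combination c * ht
  · linear_combination d * ht - hd

theorem mul_eq_zero_of_trace_mul_eq_zero [IsReduced R] {N P : Matrix (Fin 2) (Fin 2) R}
    (hNt : N.trace = 0) (hNd : N.det = 0) (hPt : P.trace = 0) (hPd : P.det = 0)
    (hNP : (N * P).trace = 0) : N * P = 0 := by
  obtain ⟨a, b, c, d, rfl⟩ : ∃ a b c d, N = !![a, b; c, d] := ⟨_, _, _, _, eta_fin_two N⟩
  obtain ⟨p, q, r, s, rfl⟩ : ∃ p q r s, P = !![p, q; r, s] := ⟨_, _, _, _, eta_fin_two P⟩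
  rw [trace_fin_two_of] at hNt hPt
  rw [det_fin_two_of] at hNd hPd
  rw [mul_fin_two, trace_fin_two_of] at hNP
  rw [mul_fin_two, fin_two_eq_zero_iff]
  -- modulo the trace and determinant relations, each entry of `N * P` squares to a multiple
  -- of `(N * P).trace`
  refine ⟨⟨?_, ?_⟩, ?_, ?_⟩ <;> apply eq_zero_of_pow_eq_zero (n := 2)
  · linear_combination b * r * hNP + q * r * hNd + a * d * hPd
      + (a * p + b * r) * (p * hNt - d * hPt)
  · linear_combination -b * q * hNP - q ^ 2 * hNd - b ^ 2 * hPd + (a * q ^ 2 + b * q * s) * hNt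
      + (b ^ 2 * s + a * b * q) * hPt
  · linear_combination -c * r * hNP - c ^ 2 * hPd - r ^ 2 * hNd + c ^ 2 * p * hPt
      + d * r ^ 2 * hNt + c * r * (p * hNt + d * hPt)
  · linear_combination c * q * hNP + a * d * hPd + q * r * hNd
      + (c * q + d * s) * (d * hPt - p * hNt)

theorem trace_sub_one (A : Matrix (Fin 2) (Fin 2) R) : (A - 1).trace = A.trace - 2 := by
  rw [trace_sub, trace_one, Fintype.card_fin, Nat.cast_ofNat]

theorem det_sub_one (A : Matrix (Fin 2) (Fin 2) R) : (A - 1).det = A.det - A.trace + 1 := by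
  simp only [det_fin_two, trace_fin_two, sub_apply, one_apply_eq,
    one_apply_ne Fin.zero_ne_one, one_apply_ne Fin.zero_ne_one.symm]
  ring

theorem trace_sub_one_mul_sub_one (A B : Matrix (Fin 2) (Fin 2) R) :
    ((A - 1) * (B - 1)).trace = (A * B).trace - A.trace - B.trace + 2 := by
  rw [sub_mul, mul_sub, mul_sub, one_mul, mul_one, one_mul, trace_sub, trace_sub, trace_sub,
    trace_one, Fintype.card_fin, Nat.cast_ofNat]
  ring

variable [IsReduced R] [Nontrivial R] {ι : Type*}

theorem exists_ne_zero_forall_mulVec_eq_zero_of_trace_mul_eq_zero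
    (N : ι → Matrix (Fin 2) (Fin 2) R) (ht : ∀ i, (N i).trace = 0) (hd : ∀ i, (N i).det = 0)
    (hN : Pairwise fun i j ↦ (N i * N j).trace = 0) :
    ∃ v ≠ 0, ∀ i, N i *ᵥ v = 0 := by
  by_cases hzero : ∀ i, N i = 0
  · obtain ⟨v, hv⟩ := exists_ne (0 : Fin 2 → R)
    exact ⟨v, hv, fun i ↦ by rw [hzero i, zero_mulVec]⟩
  obtain ⟨i, hi⟩ := not_forall.mp hzero
  obtain ⟨w, hw⟩ : ∃ w, N i *ᵥ w ≠ 0 := by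
    by_contra! h
    exact hi (ext_iff_mulVec.mpr fun w ↦ by rw [h w, zero_mulVec])
  refine ⟨N i *ᵥ w, hw, fun j ↦ ?_⟩
  rw [mulVec_mulVec]
  obtain rfl | hji := eq_or_ne j i
  · rw [mul_self_eq_zero_of_trace_eq_zero_of_det_eq_zero (ht j) (hd j), zero_mulVec]
  · rw [mul_eq_zero_of_trace_mul_eq_zero (ht j) (hd j) (ht i) (hd i) (hN hji), zero_mulVec]

theorem exists_ne_zero_forall_mulVec_eq_self_of_trace_mul_eq_two
    (A : ι → Matrix (Fin 2) (Fin 2) R) (hd : ∀ i, (A i).det = 1) (ht : ∀ i, (A i).trace = 2)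
    (hA : Pairwise fun i j ↦ (A i * A j).trace = 2) :
    ∃ v ≠ 0, ∀ i, A i *ᵥ v = v := by
  obtain ⟨v, hv, hker⟩ := exists_ne_zero_forall_mulVec_eq_zero_of_trace_mul_eq_zero
    (fun i ↦ A i - 1) (fun i ↦ by rw [trace_sub_one, ht, sub_self])
    (fun i ↦ by rw [det_sub_one, hd, ht]; norm_num)
    (fun i j hij ↦ by dsimp only; rw [trace_sub_one_mul_sub_one, hA hij, ht, ht]; norm_num)
  refine ⟨v, hv, fun i ↦ ?_⟩
  rw [← sub_eq_zero, ← hker i, sub_mulVec, one_mulVec]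

end Matrix

theorem common_eigenvector_of_parabolic_triple
    (Mx My Mz : Matrix.SpecialLinearGroup (Fin 2) ℂ)
    (hx : Matrix.trace ((Mx : Matrix (Fin 2) (Fin 2) ℂ)) = 2)
    (hy : Matrix.trace ((My : Matrix (Fin 2) (Fin 2) ℂ)) = 2)
    (hz : Matrix.trace ((Mz : Matrix (Fin 2) (Fin 2) ℂ)) = 2)
    (hxy : Matrix.trace ((↑(Mx * My) : Matrix (Fin 2) (Fin 2) ℂ)) = 2)
    (hxz : Matrix.trace ((↑(Mx * Mz) : Matrix (Fin 2) (Fin 2) ℂ)) = 2)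
    (hyz : Matrix.trace ((↑(My * Mz) : Matrix (Fin 2) (Fin 2) ℂ)) = 2) :
    ∃ v : Fin 2 → ℂ, v ≠ 0 ∧ ∃ a b c : ℂ,
      (Mx : Matrix (Fin 2) (Fin 2) ℂ).mulVec v = a • v ∧
      (My : Matrix (Fin 2) (Fin 2) ℂ).mulVec v = b • v ∧
      (Mz : Matrix (Fin 2) (Fin 2) ℂ).mulVec v = c • v := by
  obtain ⟨v, hv, hfix⟩ := Matrix.exists_ne_zero_forall_mulVec_eq_self_of_trace_mul_eq_two
    ![(Mx : Matrix (Fin 2) (Fin 2) ℂ), My, Mz] (by simp [Fin.forall_fin_succ])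
    (by simp [Fin.forall_fin_succ, hx, hy, hz])
    (by
      intro i j hij
      fin_cases i <;> fin_cases j <;>
        first | exact absurd rfl hij | assumption | rwa [Matrix.trace_mul_comm])
  exact ⟨v, hv, 1, 1, 1, by simpa using hfix 0, by simpa using hfix 1, by simpa using hfix 2⟩
end
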